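/- Every interior cell of a matroid subdivision of the hypersimplex Δ(k,n) has dimension at least n − k; equivalently, the tight-span of a matroid subdivision of Δ(k,n) is at most (k−1)-dimensional. -/

import Mathlib

/-! A cell outside the boundary of `Δ(k,n)` lies on none of the faces `x e = 0`, so its matroid
has no loops. Fix a base `B₀`; for each `e ∉ B₀`, basis exchange gives a base `B_e ⊆ B₀ ∪ {e}`
containing `e`. The `n - k` edge directions `𝟙_{B_e} - 𝟙_{B₀}` are linearly independent,
since on the coordinates outside `B₀` they form the identity matrix. -/

open scoped Classical

section Subdivision

variable {E : Type*} [AddCommGroup E] [Module ℝ E]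

/-- A polytope: the convex hull of a finite set of points. -/
def IsPolytope (P : Set E) : Prop := ∃ s : Finset E, P = convexHull ℝ (s : Set E)

/-- `F` is a face of `C`: a convex extreme subset. -/
def IsFaceOf (F C : Set E) : Prop := IsExtreme ℝ C F ∧ Convex ℝ F

/-- A polytopal subdivision of a polytope `P`: a finite collection of nonempty polytopes
(cells), closed under taking (nonempty) faces, covering `P`, such that any two cells meet
in a common (possibly empty) face, and such that all vertices of cells are vertices of `P`. -/
structure IsSubdivision (P : Set E) (S : Set (Set E)) : Prop where
  finite : S.Finite
  nonempty_cell : ∀ C ∈ S, C.Nonempty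
  poly : ∀ C ∈ S, IsPolytope C
  face_closed : ∀ C ∈ S, ∀ F, IsFaceOf F C → F.Nonempty → F ∈ S
  cover : ⋃₀ S = P
  inter_face : ∀ C ∈ S, ∀ D ∈ S, IsFaceOf (C ∩ D) C
  vertices : ∀ C ∈ S, ∀ x ∈ Set.extremePoints ℝ C, x ∈ Set.extremePoints ℝ P

/-- A maximal cell of a collection of cells. -/
def MaximalCell (S : Set (Set E)) (C : Set E) : Prop :=
  C ∈ S ∧ ∀ D ∈ S, C ⊆ D → D = C

/-- The (relative) boundary of a polytope: the union of its proper faces. -/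
def relBoundary (P : Set E) : Set E := ⋃₀ {F | IsFaceOf F P ∧ F ≠ P}

/-- The restriction `Σ|_{P'} = {S ∩ P' : S ∈ Σ}` of a subdivision to a subpolytope. -/
def restrictSubdiv (S : Set (Set E)) (P' : Set E) : Set (Set E) := (fun C => C ∩ P') '' S

/-- `P'` is a subpolytope of `P`: the convex hull of a subset of the vertices of `P`. -/
def IsSubpolytope (P' P : Set E) : Prop :=
  ∃ W : Set E, W ⊆ Set.extremePoints ℝ P ∧ P' = convexHull ℝ W

/-- The tight-spans of `(P, S)` and `(P', S')` are isomorphic as posets: there is a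
bijection between the interior cells (those not contained in the boundary) which is an
isomorphism for the partial order by reverse inclusion. -/
def TightSpanIso (P : Set E) (S : Set (Set E)) (P' : Set E) (S' : Set (Set E)) : Prop :=
  ∃ e : {C : Set E // C ∈ S ∧ ¬ C ⊆ relBoundary P} ≃
        {C : Set E // C ∈ S' ∧ ¬ C ⊆ relBoundary P'},
    ∀ C D, C.1 ⊆ D.1 ↔ (e C).1 ⊆ (e D).1

/-- `S'` coarsens `S`: every cell of `S` is contained in some cell of `S'`. -/
def Coarsens (S S' : Set (Set E)) : Prop := ∀ C ∈ S, ∃ D ∈ S', C ⊆ D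

/-- The trivial subdivision of a polytope: its collection of nonempty faces. -/
def trivialSubdiv (P : Set E) : Set (Set E) := {F | IsFaceOf F P ∧ F.Nonempty}

/-- A coarsest (non-trivial) subdivision: a non-trivial subdivision whose only proper
coarsening is the trivial subdivision. -/
def IsCoarsest (P : Set E) (S : Set (Set E)) : Prop :=
  IsSubdivision P S ∧ S ≠ trivialSubdiv P ∧
    ∀ S', IsSubdivision P S' → Coarsens S S' → S' ≠ S → S' = trivialSubdiv P

end Subdivision

/-- The 0/1 indicator vector of a subset of `[n]`. -/
noncomputable def indicatorVec {n : ℕ} (B : Set (Fin n)) : Fin n → ℝ :=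
  fun i => if i ∈ B then 1 else 0

/-- The hypersimplex `Δ(k,n)`. -/
noncomputable def hypersimplex (k n : ℕ) : Set (Fin n → ℝ) :=
  convexHull ℝ {x | ∃ σ : Finset (Fin n), σ.card = k ∧ x = indicatorVec (↑σ : Set (Fin n))}

/-- `C` is the matroid polytope of a rank-`k` matroid on `[n]`. -/
def IsMatroidPolytope (k n : ℕ) (C : Set (Fin n → ℝ)) : Prop :=
  ∃ M : Matroid (Fin n), M.E = Set.univ ∧ (∀ b, M.IsBase b → b.ncard = k) ∧
    C = convexHull ℝ {x | ∃ b, M.IsBase b ∧ x = indicatorVec b}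

noncomputable def matroidPolytope {n : ℕ} (M : Matroid (Fin n)) : Set (Fin n → ℝ) :=
  convexHull ℝ {x | ∃ b, M.IsBase b ∧ x = indicatorVec b}

lemma isFaceOf_inter_setOf_eq_zero {E : Type*} [AddCommGroup E] [Module ℝ E] {P : Set E}
    (hP : Convex ℝ P) (f : E →ₗ[ℝ] ℝ) (hf : ∀ x ∈ P, 0 ≤ f x) :
    IsFaceOf (P ∩ {x | f x = 0}) P := by
  refine ⟨⟨Set.inter_subset_left, ?_⟩, hP.inter (convex_hyperplane f.isLinear 0)⟩
  rintro x₁ hx₁ x₂ hx₂ x ⟨-, hx⟩ ⟨a, b, ha, hb, -, rfl⟩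
  have h₁ := mul_nonneg ha.le (hf x₁ hx₁)
  have h₂ := mul_nonneg hb.le (hf x₂ hx₂)
  have hsum : a * f x₁ + b * f x₂ = 0 := by simpa using hx
  exact ⟨hx₁, (mul_eq_zero.mp (by linarith : a * f x₁ = 0)).resolve_left ha.ne'⟩

section Hypersimplex

variable {k n : ℕ}

lemma indicatorVec_mem_hypersimplex {b : Set (Fin n)} (hb : b.ncard = k) :
    indicatorVec b ∈ hypersimplex k n :=
  subset_convexHull ℝ _ ⟨b.toFinset, by rwa [← Set.ncard_eq_toFinset_card'], by simp⟩

lemma hypersimplex_coord_nonneg {x : Fin n → ℝ} (hx : x ∈ hypersimplex k n) (e : Fin n) :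
    0 ≤ x e := by
  refine convexHull_min ?_ (convex_halfSpace_ge (LinearMap.proj (R := ℝ) e).isLinear 0) hx
  rintro _ ⟨σ, -, rfl⟩
  show 0 ≤ indicatorVec (σ : Set (Fin n)) e
  unfold indicatorVec
  split_ifs <;> norm_num

lemma exists_mem_hypersimplex_coord_eq_one (hk : 0 < k) (hkn : k ≤ n) (e : Fin n) :
    ∃ x ∈ hypersimplex k n, x e = 1 := by
  obtain ⟨σ, heσ, -, hσ⟩ := Finset.exists_subsuperset_card_eq (n := k) (Finset.subset_univ {e})
    (by rwa [Finset.card_singleton]) (by rwa [Finset.card_univ, Fintype.card_fin])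
  refine ⟨indicatorVec (σ : Set (Fin n)), subset_convexHull ℝ _ ⟨σ, hσ, rfl⟩, ?_⟩
  simp [indicatorVec, Finset.singleton_subset_iff.mp heσ]

lemma hypersimplex_inter_coord_eq_zero_subset_relBoundary (hk : 0 < k) (hkn : k ≤ n)
    (e : Fin n) :
    hypersimplex k n ∩ {x | x e = 0} ⊆ relBoundary (hypersimplex k n) := by
  refine Set.subset_sUnion_of_mem ⟨isFaceOf_inter_setOf_eq_zero (P := hypersimplex k n)
    (convex_convexHull ℝ _) (LinearMap.proj e) fun x hx => hypersimplex_coord_nonneg hx e,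
    fun hface => ?_⟩
  obtain ⟨x, hx, hxe⟩ := exists_mem_hypersimplex_coord_eq_one hk hkn e
  rw [← hface] at hx
  exact one_ne_zero (hxe.symm.trans hx.2)

lemma matroidPolytope_subset_relBoundary_of_isLoop (hk : 0 < k) (hkn : k ≤ n)
    {M : Matroid (Fin n)} (hrank : ∀ b, M.IsBase b → b.ncard = k) {e : Fin n}
    (he : M.IsLoop e) :
    matroidPolytope M ⊆ relBoundary (hypersimplex k n) := by
  refine (convexHull_min ?_ ((convex_convexHull ℝ _).inter
    (convex_hyperplane (LinearMap.proj (R := ℝ) e).isLinear 0))).trans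
    (hypersimplex_inter_coord_eq_zero_subset_relBoundary hk hkn e)
  rintro _ ⟨b, hb, rfl⟩
  have heb : e ∉ b := (Matroid.isLoop_iff_forall_mem_compl_isBase.mp he b hb).2
  exact ⟨indicatorVec_mem_hypersimplex (hrank b hb), by simp [indicatorVec, heb]⟩

end Hypersimplex

lemma Matroid.IsNonloop.exists_isBase_mem_subset_insert {α : Type*} {M : Matroid α} {e : α}
    {B : Set α} (he : M.IsNonloop e) (hB : M.IsBase B) :
    ∃ B', M.IsBase B' ∧ e ∈ B' ∧ B' ⊆ insert e B := by
  obtain ⟨B', hB', heB', hB'B⟩ :=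
    (Matroid.indep_singleton.mpr he).exists_isBase_subset_union_isBase hB
  exact ⟨B', hB', heB' rfl, hB'B⟩

lemma linearIndependent_indicatorVec_sub_indicatorVec {n : ℕ} {B₀ : Set (Fin n)}
    (B : ↥B₀ᶜ → Set (Fin n)) (hmem : ∀ e, ↑e ∈ B e) (hsub : ∀ e, B e ⊆ insert ↑e B₀) :
    LinearIndependent ℝ fun e => indicatorVec (B e) - indicatorVec B₀ := by
  have hunit : ∀ e e' : ↥B₀ᶜ,
      indicatorVec (B e) e' - indicatorVec B₀ e' = (Pi.single e 1 : ↥B₀ᶜ → ℝ) e' := by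
    intro e e'
    have hB : (e' : Fin n) ∈ B e ↔ e' = e :=
      ⟨fun h => Subtype.ext ((hsub e h).resolve_right e'.2), fun h => h ▸ hmem e'⟩
    have he' : (e' : Fin n) ∉ B₀ := e'.2
    simp [indicatorVec, hB, he', Pi.single_apply]
  refine LinearIndependent.of_comp (LinearMap.funLeft ℝ ℝ ((↑) : ↥B₀ᶜ → Fin n)) ?_
  convert (Pi.basisFun ℝ ↥B₀ᶜ).linearIndependent using 1
  ext e e'
  simpa using hunit e e'

lemma ncard_compl_le_finrank_vectorSpan_matroidPolytope {n : ℕ} {M : Matroid (Fin n)}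
    (hM : ∀ e, M.IsNonloop e) {B₀ : Set (Fin n)} (hB₀ : M.IsBase B₀) :
    B₀ᶜ.ncard ≤ Module.finrank ℝ (vectorSpan ℝ (matroidPolytope M)) := by
  choose B hB hmem hsub using fun e : ↥B₀ᶜ => (hM e).exists_isBase_mem_subset_insert hB₀
  have hvertex : ∀ b, M.IsBase b → indicatorVec b ∈ matroidPolytope M :=
    fun b hb => subset_convexHull ℝ _ ⟨b, hb, rfl⟩
  let w : ↥B₀ᶜ → vectorSpan ℝ (matroidPolytope M) := fun e =>
    ⟨indicatorVec (B e) - indicatorVec B₀,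
      vsub_mem_vectorSpan ℝ (hvertex _ (hB e)) (hvertex _ hB₀)⟩
  have hw : LinearIndependent ℝ w :=
    .of_comp (Submodule.subtype _) (linearIndependent_indicatorVec_sub_indicatorVec B hmem hsub)
  rw [← Nat.card_coe_set_eq, Nat.card_eq_fintype_card]
  exact hw.fintype_card_le_finrank

theorem interior_cell_dim_ge_general (k n : ℕ) (hk : 0 < k) (hkn : k < n)
    (S : Set (Set (Fin n → ℝ)))
    (hmat : ∀ C ∈ S, IsMatroidPolytope k n C) :
    ∀ C ∈ S, ¬ C ⊆ relBoundary (hypersimplex k n) →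
      n - k ≤ Module.finrank ℝ (vectorSpan ℝ C) := by
  intro C hC hCint
  obtain ⟨M, hE, hrank, rfl⟩ := hmat C hC
  have hloopless : ∀ e, M.IsNonloop e := fun e => by
    by_contra h
    exact hCint (matroidPolytope_subset_relBoundary_of_isLoop hk hkn.le hrank
      (Matroid.isLoop_of_not_isNonloop (by simp [hE]) h))
  obtain ⟨B₀, hB₀⟩ := M.exists_isBase
  calc n - k = B₀ᶜ.ncard := by
        rw [Set.ncard_compl, hrank B₀ hB₀, Nat.card_eq_fintype_card, Fintype.card_fin]
    _ ≤ _ := ncard_compl_le_finrank_vectorSpan_matroidPolytope hloopless hB₀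

/-- Every interior cell of a matroid subdivision of `Δ(k,n)` has dimension at least
`n − k`; equivalently, the tight-span of a matroid subdivision of `Δ(k,n)` is at most
`(k−1)`-dimensional. -/
theorem interior_cell_dim_ge (k n : ℕ) (hk : 0 < k) (hkn : k < n)
    (S : Set (Set (Fin n → ℝ))) (hS : IsSubdivision (hypersimplex k n) S)
    (hmat : ∀ C ∈ S, IsMatroidPolytope k n C) :
    ∀ C ∈ S, ¬ C ⊆ relBoundary (hypersimplex k n) →
      n - k ≤ Module.finrank ℝ (vectorSpan ℝ C) :=
  interior_cell_dim_ge_general k n hk hkn S hmat
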